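/- arXiv:1204.5879 — 8 statements merged into one kernel-verified Lean document; each statement's English description precedes it below -/
import Mathlib

section
/- Let L be a poset with least element 0 and greatest element 1, and let G be an MH-homogeneous L-colored graph. Suppose there exist three distinct vertices a0, a1, x of G such that (i) χ(a0,a1) ≻ 0 and χ(x,a1) ≻ 0, (ii) χ(a0,x) ⪯ χ(a0,a1) and χ(x) ⪯ χ(a1), and (iii) χ(a0,x) ≺ χ(a0,a1) or χ(x) ≺ χ(a1). Then G is infinite. -/
/-- An `L`-colored graph on vertex set `V`: vertex colors and symmetric,
irreflexive edge colors (color `⊥` means "no edge"). -/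
structure LGraph (L : Type*) [PartialOrder L] [BoundedOrder L] (V : Type*) where
  vcol : V → L
  ecol : V → V → L
  ecol_irrefl : ∀ x, ecol x x = ⊥
  ecol_symm : ∀ x y, ecol x y = ecol y x

variable {L V : Type*} [PartialOrder L] [BoundedOrder L]

/-- An endomorphism of an `L`-colored graph weakly increases all colors. -/
def LGraph.IsEndo (G : LGraph L V) (f : V → V) : Prop :=
  (∀ x, G.vcol x ≤ G.vcol (f x)) ∧ (∀ x y, G.ecol x y ≤ G.ecol (f x) (f y))

/-- A homomorphism from the finite induced substructure on `S` into `G`. -/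
def LGraph.IsPartialHom (G : LGraph L V) (S : Set V) (f : V → V) : Prop :=
  (∀ x ∈ S, G.vcol x ≤ G.vcol (f x)) ∧
  (∀ x ∈ S, ∀ y ∈ S, G.ecol x y ≤ G.ecol (f x) (f y))

/-- `G` is MH-homogeneous: every monomorphism between finite induced
substructures extends to an endomorphism. -/
def LGraph.MH (G : LGraph L V) : Prop :=
  ∀ S : Set V, S.Finite → ∀ f : V → V, Set.InjOn f S → G.IsPartialHom S f →
    ∃ g : V → V, G.IsEndo g ∧ ∀ x ∈ S, g x = f x

/-- `G` is HH-homogeneous: every homomorphism between finite induced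
substructures extends to an endomorphism. -/
def LGraph.HH (G : LGraph L V) : Prop :=
  ∀ S : Set V, S.Finite → ∀ f : V → V, G.IsPartialHom S f →
    ∃ g : V → V, G.IsEndo g ∧ ∀ x ∈ S, g x = f x

/-- Adjacency: edge color is nonzero. -/
def LGraph.Adj (G : LGraph L V) (x y : V) : Prop := G.ecol x y ≠ ⊥

/-- Two vertices are connected if joined by a path of edges of nonzero color. -/
def LGraph.Conn (G : LGraph L V) (x y : V) : Prop := Relation.ReflTransGen G.Adj x y

/-- `S` is a connected component of `G`. -/
def LGraph.IsComponent (G : LGraph L V) (S : Set V) : Prop :=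
  ∃ x : V, S = {y | G.Conn x y}

/-- All vertices of `G` have the same color. -/
def LGraph.VertexUniform (G : LGraph L V) : Prop := ∃ α : L, ∀ x, G.vcol x = α

/-- `G` restricted to `S` is a uniform `L`-colored graph: all vertices of one
color and all edges between distinct vertices of one fixed nonzero color. -/
def LGraph.UniformOn (G : LGraph L V) (S : Set V) : Prop :=
  (∃ α : L, ∀ x ∈ S, G.vcol x = α) ∧
  (∃ β : L, ⊥ < β ∧ ∀ x ∈ S, ∀ y ∈ S, x ≠ y → G.ecol x y = β)

/-- `G[S]` is isomorphic to `U(n, α, β)`, the connected uniform graph on `n`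
vertices, all colored `α`, with all edges colored `β ≻ ⊥`. -/
def LGraph.IsU (G : LGraph L V) (S : Set V) (n : ℕ) (α β : L) : Prop :=
  S.ncard = n ∧ (∀ x ∈ S, G.vcol x = α) ∧ ⊥ < β ∧
  (∀ x ∈ S, ∀ y ∈ S, x ≠ y → G.ecol x y = β)

/-- `L` is a diamond: all elements other than `⊥` and `⊤` are pairwise
incomparable. -/
def IsDiamond (L : Type*) [PartialOrder L] [BoundedOrder L] : Prop :=
  ∀ a b : L, a ≠ ⊥ → a ≠ ⊤ → b ≠ ⊥ → b ≠ ⊤ → a ≤ b → a = b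

/-- An automorphism of an `L`-colored graph. -/
def LGraph.IsAuto (G : LGraph L V) (f : V → V) : Prop :=
  Function.Bijective f ∧ (∀ x, G.vcol (f x) = G.vcol x) ∧
  (∀ x y, G.ecol (f x) (f y) = G.ecol x y)

/-- `G` is ultrahomogeneous: every isomorphism between finite induced
substructures extends to an automorphism. -/
def LGraph.Ultra (G : LGraph L V) : Prop :=
  ∀ S : Set V, S.Finite → ∀ f : V → V, Set.InjOn f S →
    (∀ x ∈ S, G.vcol (f x) = G.vcol x) →
    (∀ x ∈ S, ∀ y ∈ S, G.ecol (f x) (f y) = G.ecol x y) →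
    ∃ g : V → V, G.IsAuto g ∧ ∀ x ∈ S, g x = f x

/-- Lemma `pump-pump`. -/
theorem stmt0 (G : LGraph L V) (hMH : G.MH)
    (a0 a1 x : V) (hd01 : a0 ≠ a1) (hd0x : a0 ≠ x) (hd1x : a1 ≠ x)
    (h1 : ⊥ < G.ecol a0 a1) (h2 : ⊥ < G.ecol x a1)
    (h3 : G.ecol a0 x ≤ G.ecol a0 a1) (h4 : G.vcol x ≤ G.vcol a1)
    (h5 : G.ecol a0 x < G.ecol a0 a1 ∨ G.vcol x < G.vcol a1) :
    Infinite V := by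
  by_contra hinf
  rw [not_infinite_iff_finite] at hinf
  haveI : Finite V := hinf
  haveI : Fintype V := Fintype.ofFinite V
  haveI : DecidableEq V := Classical.decEq V
  set β := G.ecol x a1 with hβ
  -- main pumping claim
  have key : ∀ n : ℕ, ∃ (C : Finset V) (p r : V),
      C.card = n ∧
      (∀ c ∈ C, ∀ c' ∈ C, c ≠ c' → β ≤ G.ecol c c') ∧
      (∀ c ∈ C, β ≤ G.ecol p c) ∧
      (∀ c ∈ C, G.ecol r c ≤ G.ecol p c) ∧
      β ≤ G.ecol r p ∧
      G.ecol a0 r ≤ G.ecol a0 p ∧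
      G.vcol r ≤ G.vcol p ∧
      ⊥ < G.ecol a0 p ∧
      ((∃ c ∈ C, G.ecol r c < G.ecol p c) ∨ G.ecol a0 r < G.ecol a0 p ∨
        G.vcol r < G.vcol p) ∧
      a0 ∉ C ∧ r ∉ C ∧ r ≠ a0 := by
    intro n
    induction n with
    | zero =>
      refine ⟨∅, a1, x, rfl, ?_, ?_, ?_, le_refl _, h3, h4, h1, Or.inr h5, ?_, ?_, hd0x.symm⟩
      all_goals simp
    | succ n ih =>
      obtain ⟨C, p, r, hcard, hpair, hatt, hdom, hedge, ha0dom, hvdom, hA0, hstr,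
        ha0C, hrC, hra0⟩ := ih
      -- derived distinctness
      have hpa0 : p ≠ a0 := by
        intro h; rw [h, G.ecol_irrefl] at hA0; exact lt_irrefl _ hA0
      have hpC : p ∉ C := by
        intro h
        have := hatt p h
        rw [G.ecol_irrefl] at this
        exact absurd (h2.trans_le this) (lt_irrefl _)
      have hrp : r ≠ p := by
        intro h; rw [h, G.ecol_irrefl] at hedge
        exact absurd (h2.trans_le hedge) (lt_irrefl _)
      -- the monomorphism
      set S : Set V := insert a0 (insert r (C : Set V)) with hSdef
      have hSfin : S.Finite := ((C.finite_toSet).insert r).insert a0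
      set f : V → V := fun z => if z = r then p else z with hfdef
      have hmem : ∀ z ∈ S, z = a0 ∨ z = r ∨ z ∈ C := by
        intro z hz
        rcases hz with h | h | h
        · exact Or.inl h
        · exact Or.inr (Or.inl h)
        · exact Or.inr (Or.inr h)
      have ha0S : a0 ∈ S := Set.mem_insert _ _
      have hrS : r ∈ S := Set.mem_insert_of_mem _ (Set.mem_insert _ _)
      have hcS : ∀ c ∈ C, c ∈ S := fun c hc =>
        Set.mem_insert_of_mem _ (Set.mem_insert_of_mem _ hc)
      have hfr : f r = p := by simp [hfdef]
      have hfa0 : f a0 = a0 := by simp [hfdef, Ne.symm hra0]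
      have hfc : ∀ c ∈ C, f c = c := by
        intro c hc
        have : c ≠ r := fun h => hrC (h ▸ hc)
        simp [hfdef, this]
      have hinj : Set.InjOn f S := by
        intro z1 hz1 z2 hz2 heq
        by_cases e1 : z1 = r <;> by_cases e2 : z2 = r
        · rw [e1, e2]
        · exfalso
          rw [e1, hfr] at heq
          simp only [hfdef, if_neg e2] at heq
          rcases hmem z2 hz2 with h | h | h
          · exact hpa0 (by rw [heq, h])
          · exact e2 h
          · exact hpC (heq ▸ h)
        · exfalso
          rw [e2, hfr] at heq
          simp only [hfdef, if_neg e1] at heq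
          rcases hmem z1 hz1 with h | h | h
          · exact hpa0 (by rw [← heq, h])
          · exact e1 h
          · exact hpC (by rw [heq] at h; exact h)
        · simpa [hfdef, e1, e2] using heq
      have hhom : G.IsPartialHom S f := by
        constructor
        · intro z hz
          by_cases e : z = r
          · rw [e, hfr]; exact hvdom
          · simp [hfdef, e]
        · intro z1 hz1 z2 hz2
          by_cases e1 : z1 = r <;> by_cases e2 : z2 = r
          · rw [e1, e2, hfr, G.ecol_irrefl]; exact bot_le
          · rw [e1, hfr]
            simp only [hfdef, if_neg e2]
            rcases hmem z2 hz2 with h | h | h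
            · rw [h, G.ecol_symm r a0, G.ecol_symm p a0]; exact ha0dom
            · exact absurd h e2
            · exact hdom z2 h
          · rw [e2, hfr]
            simp only [hfdef, if_neg e1]
            rcases hmem z1 hz1 with h | h | h
            · rw [h]; exact ha0dom
            · exact absurd h e1
            · rw [G.ecol_symm z1 r, G.ecol_symm z1 p]; exact hdom z1 h
          · simp [hfdef, e1, e2]
      obtain ⟨T, hTe, hText⟩ := hMH S hSfin f hinj hhom
      have hTv := hTe.1
      have hTee := hTe.2
      have hTa0 : T a0 = a0 := by rw [hText a0 ha0S, hfa0]
      have hTr : T r = p := by rw [hText r hrS, hfr]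
      have hTc : ∀ c ∈ C, T c = c := fun c hc => by rw [hText c (hcS c hc), hfc c hc]
      -- the orbit of r under T
      classical
      set seq : ℕ → V := fun i => T^[i] r with hseqdef
      have hseq0 : seq 0 = r := rfl
      have hseqS : ∀ i, seq (i + 1) = T (seq i) := by
        intro i; simp only [hseqdef]; exact Function.iterate_succ_apply' T i r
      have hseq1 : seq 1 = p := by rw [hseqS 0, hseq0, hTr]
      have L1 : ∀ i, β ≤ G.ecol (seq i) (seq (i + 1)) := by
        intro i; induction i with
        | zero => rw [hseq0, hseq1]; exact hedge
        | succ k ihk =>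
          calc β ≤ G.ecol (seq k) (seq (k + 1)) := ihk
          _ ≤ G.ecol (T (seq k)) (T (seq (k + 1))) := hTee _ _
          _ = G.ecol (seq (k + 1)) (seq (k + 2)) := by rw [← hseqS, ← hseqS]
      have L2 : ∀ i, ∀ c ∈ C, β ≤ G.ecol (seq (i + 1)) c := by
        intro i; induction i with
        | zero => intro c hc; rw [hseq1]; exact hatt c hc
        | succ k ihk =>
          intro c hc
          calc β ≤ G.ecol (seq (k + 1)) c := ihk c hc
          _ ≤ G.ecol (T (seq (k + 1))) (T c) := hTee _ _
          _ = G.ecol (seq (k + 2)) c := by rw [← hseqS, hTc c hc]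
      have Lfix : ∀ z, T z = z → ∀ i, G.ecol (seq i) z ≤ G.ecol (seq (i + 1)) z := by
        intro z hz i
        calc G.ecol (seq i) z ≤ G.ecol (T (seq i)) (T z) := hTee _ _
        _ = G.ecol (seq (i + 1)) z := by rw [← hseqS, hz]
      have Lfixle : ∀ z, T z = z → ∀ i j, i ≤ j → G.ecol (seq i) z ≤ G.ecol (seq j) z := by
        intro z hz i j hij
        induction j, hij using Nat.le_induction with
        | base => exact le_refl _
        | succ m _ ihm => exact ihm.trans (Lfix z hz m)
      have La0 : ∀ i, G.ecol a0 (seq i) ≤ G.ecol a0 (seq (i + 1)) := by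
        intro i
        calc G.ecol a0 (seq i) ≤ G.ecol (T a0) (T (seq i)) := hTee _ _
        _ = G.ecol a0 (seq (i + 1)) := by rw [hTa0, ← hseqS]
      have La0le : ∀ i j, i ≤ j → G.ecol a0 (seq i) ≤ G.ecol a0 (seq j) := by
        intro i j hij
        induction j, hij using Nat.le_induction with
        | base => exact le_refl _
        | succ m _ ihm => exact ihm.trans (La0 m)
      have Lv : ∀ i, G.vcol (seq i) ≤ G.vcol (seq (i + 1)) := by
        intro i
        calc G.vcol (seq i) ≤ G.vcol (T (seq i)) := hTv _
        _ = G.vcol (seq (i + 1)) := by rw [← hseqS]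
      have Lvle : ∀ i j, i ≤ j → G.vcol (seq i) ≤ G.vcol (seq j) := by
        intro i j hij
        induction j, hij using Nat.le_induction with
        | base => exact le_refl _
        | succ m _ ihm => exact ihm.trans (Lv m)
      have Lshift : ∀ i j, G.ecol (seq i) (seq j) ≤ G.ecol (seq (i + 1)) (seq (j + 1)) := by
        intro i j
        calc G.ecol (seq i) (seq j) ≤ G.ecol (T (seq i)) (T (seq j)) := hTee _ _
        _ = G.ecol (seq (i + 1)) (seq (j + 1)) := by rw [← hseqS, ← hseqS]
      -- a repeat exists
      obtain ⟨i0, j0, hne, heq0⟩ := Finite.exists_ne_map_eq_of_infinite seq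
      have hex : ∃ j, ∃ i, i < j ∧ seq i = seq j := by
        rcases lt_or_gt_of_ne hne with h | h
        · exact ⟨j0, i0, h, heq0⟩
        · exact ⟨i0, j0, h, heq0.symm⟩
      obtain ⟨iw, hiwlt, hiweq⟩ := Nat.find_spec hex
      set J := Nat.find hex with hJdef
      have hinjpre : ∀ i j, i < j → j < J → seq i ≠ seq j := by
        intro i j hij hjJ heq
        exact Nat.find_min hex hjJ ⟨i, hij, heq⟩
      have hs2 : iw + 2 ≤ J := by
        by_contra hcon
        have hJeq : J = iw + 1 := by omega
        have hb := L1 iw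
        have hss : seq (iw + 1) = seq iw := by rw [← hJeq, ← hiweq]
        rw [hss, G.ecol_irrefl] at hb
        exact absurd (h2.trans_le hb) (lt_irrefl _)
      rcases Nat.eq_zero_or_pos iw with hiw0 | hiwpos
      · -- cycle through r : contradiction with strictness
        exfalso
        subst hiw0
        have hJr : seq J = r := by rw [← hiweq, hseq0]
        have heqfix : ∀ z, T z = z → G.ecol r z = G.ecol p z := by
          intro z hz
          refine le_antisymm ?_ ?_
          · have h := Lfix z hz 0
            rwa [hseq0, hseq1] at h
          · have h := Lfixle z hz 1 J (by omega)
            rwa [hseq1, hJr] at h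
        have heqa0 : G.ecol a0 r = G.ecol a0 p := by
          refine le_antisymm ha0dom ?_
          have h := La0le 1 J (by omega)
          rwa [hseq1, hJr] at h
        have heqv : G.vcol r = G.vcol p := by
          refine le_antisymm hvdom ?_
          have h := Lvle 1 J (by omega)
          rwa [hseq1, hJr] at h
        rcases hstr with ⟨c, hc, hlt⟩ | hlt | hlt
        · rw [heqfix c (hTc c hc)] at hlt; exact lt_irrefl _ hlt
        · rw [heqa0] at hlt; exact lt_irrefl _ hlt
        · rw [heqv] at hlt; exact lt_irrefl _ hlt
      · obtain ⟨k, rfl⟩ : ∃ k, iw = k + 1 := ⟨iw - 1, by omega⟩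
        set l := J - 1 with hldef
        have hl1 : l + 1 = J := by omega
        have hlk : k + 2 ≤ l := by omega
        set s := J - (k + 1) with hsdef
        have hs : k + 1 + s = J := by omega
        have hsge : 2 ≤ s := by omega
        have hper : ∀ d, seq (k + 1 + d + s) = seq (k + 1 + d) := by
          intro d; induction d with
          | zero =>
            have e : k + 1 + 0 + s = J := by omega
            rw [e]
            simpa using hiweq.symm
          | succ m ihm =>
            have e1 : k + 1 + (m + 1) + s = (k + 1 + m + s) + 1 := by omega
            have e2 : k + 1 + (m + 1) = (k + 1 + m) + 1 := by omega
            rw [e1, e2, hseqS, hseqS, ihm]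
        have hcmono : ∀ d1 d2, d1 ≤ d2 →
            G.ecol (seq (k + 1 + d1)) (seq (l + d1)) ≤
              G.ecol (seq (k + 1 + d2)) (seq (l + d2)) := by
          intro d1 d2 hd
          induction d2, hd using Nat.le_induction with
          | base => exact le_refl _
          | succ m _ ihm =>
            have e1 : k + 1 + (m + 1) = (k + 1 + m) + 1 := by omega
            have e2 : l + (m + 1) = (l + m) + 1 := by omega
            rw [e1, e2]
            exact ihm.trans (Lshift _ _)
        have hcs : G.ecol (seq (k + 1 + s)) (seq (l + s)) = G.ecol (seq (k + 1)) (seq l) := by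
          have e1 : seq (k + 1 + s) = seq (k + 1) := by
            have h := hper 0
            simpa using h
          have e2 : seq (l + s) = seq l := by
            have h := hper (l - (k + 1))
            have e : k + 1 + (l - (k + 1)) = l := by omega
            rw [e] at h
            exact h
          rw [e1, e2]
        have hA01 : G.ecol (seq (k + 1)) (seq l) ≤ G.ecol (seq (k + 1 + 1)) (seq (l + 1)) := by
          have h := hcmono 0 1 (by omega)
          simpa using h
        have hAs : G.ecol (seq (k + 1 + 1)) (seq (l + 1)) ≤ G.ecol (seq (k + 1)) (seq l) :=
          (hcmono 1 s (by omega)).trans (le_of_eq hcs)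
        have hc01 := le_antisymm hA01 hAs
        have hG2 : β ≤ G.ecol (seq (k + 1)) (seq l) := by
          rw [hc01, hl1, ← hiweq, G.ecol_symm]
          exact L1 (k + 1)
        have hG3 : G.ecol (seq k) (seq l) = ⊥ := by
          have h := Lshift k l
          rw [hl1, ← hiweq, G.ecol_irrefl] at h
          exact le_bot_iff.mp h
        have huv : seq k ≠ seq l := hinjpre k l (by omega) (by omega)
        have hvC : seq l ∉ C := by
          intro hmemC
          have h := L2 (l - 1) (seq l) hmemC
          have e : l - 1 + 1 = l := by omega
          rw [e, G.ecol_irrefl] at h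
          exact absurd (h2.trans_le h) (lt_irrefl _)
        have hva0 : seq l ≠ a0 := by
          intro hcontra
          have h := La0le 1 l (by omega)
          rw [hseq1, hcontra, G.ecol_irrefl] at h
          exact absurd (hA0.trans_le h) (lt_irrefl _)
        have hwa0lt : ⊥ < G.ecol a0 (seq (k + 1)) := by
          have h := La0le 1 (k + 1) (by omega)
          rw [hseq1] at h
          exact hA0.trans_le h
        have huC : seq k ∉ C := by
          rcases Nat.eq_zero_or_pos k with h0 | hpos
          · rw [h0, hseq0]; exact hrC
          · intro hmemC
            have h := L2 (k - 1) (seq k) hmemC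
            have e : k - 1 + 1 = k := by omega
            rw [e, G.ecol_irrefl] at h
            exact absurd (h2.trans_le h) (lt_irrefl _)
        have hua0 : seq k ≠ a0 := by
          rcases Nat.eq_zero_or_pos k with h0 | hpos
          · rw [h0, hseq0]; exact hra0
          · intro hcontra
            have h := La0le 1 k (by omega)
            rw [hseq1, hcontra, G.ecol_irrefl] at h
            exact absurd (hA0.trans_le h) (lt_irrefl _)
        refine ⟨insert (seq l) C, seq (k + 1), seq k, ?_, ?_, ?_, ?_, ?_, ?_, ?_, ?_, ?_, ?_, ?_, ?_⟩
        · rw [Finset.card_insert_of_notMem hvC, hcard]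
        · intro c1 hc1 c2 hc2 hne2
          rcases Finset.mem_insert.mp hc1 with rfl | hc1' <;>
            rcases Finset.mem_insert.mp hc2 with h2' | hc2'
          · exact absurd h2'.symm hne2
          · have h := L2 (l - 1) c2 hc2'
            have e : l - 1 + 1 = l := by omega
            rwa [e] at h
          · rw [h2', G.ecol_symm]
            have h := L2 (l - 1) c1 hc1'
            have e : l - 1 + 1 = l := by omega
            rwa [e] at h
          · exact hpair c1 hc1' c2 hc2' hne2
        · intro c hc
          rcases Finset.mem_insert.mp hc with rfl | hc'
          · exact hG2
          · exact L2 k c hc'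
        · intro c hc
          rcases Finset.mem_insert.mp hc with rfl | hc'
          · rw [hG3]; exact bot_le
          · exact Lfix c (hTc c hc') k
        · exact L1 k
        · exact La0 k
        · exact Lv k
        · exact hwa0lt
        · refine Or.inl ⟨seq l, Finset.mem_insert_self _ _, ?_⟩
          rw [hG3]
          exact h2.trans_le hG2
        · intro hmem2
          rcases Finset.mem_insert.mp hmem2 with h | h
          · exact hva0 h.symm
          · exact ha0C h
        · intro hmem2
          rcases Finset.mem_insert.mp hmem2 with h | h
          · exact huv h
          · exact huC h
        · exact hua0
  obtain ⟨C, p, r, hcard, _⟩ := key (Fintype.card V + 1)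
  have hle : C.card ≤ Fintype.card V := Finset.card_le_univ C
  omega
end

section
/- Let L be a bounded chain and G a finite MH-homogeneous L-colored graph. If x, y, z are three distinct vertices of G with χ(x,z) ≻ 0 and χ(y,z) ≻ 0, then χ(x,y) ≺ χ(x,z) if and only if χ(y) ≻ χ(z). -/
variable {L V : Type*} [PartialOrder L] [BoundedOrder L]

/-! In a finite graph, fix a finite set `F` of vertices and a retraction `h` fixing `F` whose
image `T` is as small as possible. Every endomorphism fixing `F` is then injective on `T`, so
one that maps `T` into `T` permutes it and some power of it is the identity on `T`: it is an
automorphism of `G[T]`. Together with MH-homogeneity this gives an exchange principle: if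
`a ↦ b` (fixing `A ⊇ F`) is a monomorphism between subsets of `T`, then `a` and `b` have the
same colors over `A`.

Now let `g` be an endomorphism into `T` fixing `F ∖ {y}`, with `y` adjacent to `g y` and the
orbit `g y, g² y, …` outside `F`. An idempotent power `e` of `g` sends each vertex to a
non-neighbour, so `c = e y` has no edge to `y`. The orbit ends in the set `Z` of vertices of
`T ∖ F` with the same colors over `F` as `c`, but starts outside it (`g y` is adjacent to `y`),
so some `s` in it has `s ∉ Z`, `g s ∈ Z`. Since also `e s ∈ Z`, exchanging `e s` for `g s`
over `F ∪ {s}` gives `⊥ = χ(s, e s) = χ(s, g s) ⪰ χ(y, g y) ≻ ⊥`.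

MH-homogeneity produces such a `g` whenever an edge `uv` has `χ(u) ≺ χ(v)`
(`F = {u}`, `y = u`), or `χ(x, y) ≺ χ(x, z)`, `χ(y) ⪯ χ(z)` and `yz` is an edge
(`F = {x, y}`). So in a finite MH-homogeneous graph both sides of the equivalence fail. -/

open Function Set

theorem Function.exists_iterate_idempotent {α : Type*} [Finite α] (f : α → α) :
    ∃ M, 0 < M ∧ ∀ a, f^[M] (f^[M] a) = f^[M] a := by
  obtain ⟨i, j, hne, heq⟩ := Finite.exists_ne_map_eq_of_infinite fun n : ℕ => f^[n]
  wlog hij : i < j generalizing i j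
  · exact this j i hne.symm heq.symm (hne.lt_or_gt.resolve_left hij)
  have hper : ∀ k, f^[i + k * (j - i)] = f^[i] := by
    intro k
    induction k with
    | zero => simp
    | succ k ih =>
      rw [show i + (k + 1) * (j - i) = k * (j - i) + j by rw [Nat.succ_mul]; omega,
        iterate_add, ← heq, ← iterate_add, Nat.add_comm, ih]
  refine ⟨(i + 1) * (j - i), Nat.mul_pos i.succ_pos (by omega), fun a => ?_⟩
  have hi : i ≤ (i + 1) * (j - i) := (Nat.le_mul_of_pos_right _ (by omega)).trans' i.le_succ
  rw [← iterate_add_apply, show (i + 1) * (j - i) + (i + 1) * (j - i) =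
    ((i + 1) * (j - i) - i) + (i + (i + 1) * (j - i)) by omega, iterate_add, hper,
    ← iterate_add, Nat.sub_add_cancel hi]

namespace LGraph

variable {G : LGraph L V} {F : Set V} {h : V → V}

theorem isEndo_id : G.IsEndo id := ⟨fun _ => le_rfl, fun _ _ => le_rfl⟩

theorem IsEndo.comp {f g : V → V} (hf : G.IsEndo f) (hg : G.IsEndo g) : G.IsEndo (g ∘ f) :=
  ⟨fun x => (hf.1 x).trans (hg.1 (f x)), fun x y => (hf.2 x y).trans (hg.2 (f x) (f y))⟩

theorem IsEndo.iterate {g : V → V} (hg : G.IsEndo g) : ∀ n, G.IsEndo g^[n]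
  | 0 => isEndo_id
  | n + 1 => hg.comp (hg.iterate n)

theorem IsEndo.ecol_apply_eq_bot_of_idempotent {e : V → V} (he : G.IsEndo e)
    (hidem : ∀ v, e (e v) = e v) (v : V) : G.ecol v (e v) = ⊥ :=
  le_bot_iff.1 <| (he.2 v (e v)).trans_eq <| by rw [hidem, G.ecol_irrefl]

theorem IsEndo.vcol_apply_eq_of_iterate_eq {g : V → V} (hg : G.IsEndo g) {M : ℕ} (hM : 0 < M)
    {a : V} (ha : g^[M] a = a) : G.vcol (g a) = G.vcol a := by
  obtain ⟨k, rfl⟩ := Nat.exists_eq_succ_of_ne_zero hM.ne'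
  refine le_antisymm ?_ (hg.1 a)
  simpa only [← iterate_succ_apply, ha] using (hg.iterate k).1 (g a)

theorem IsEndo.ecol_apply_eq_of_iterate_eq {g : V → V} (hg : G.IsEndo g) {M : ℕ} (hM : 0 < M)
    {a b : V} (ha : g^[M] a = a) (hb : g^[M] b = b) : G.ecol (g a) (g b) = G.ecol a b := by
  obtain ⟨k, rfl⟩ := Nat.exists_eq_succ_of_ne_zero hM.ne'
  refine le_antisymm ?_ (hg.2 a b)
  simpa only [← iterate_succ_apply, ha, hb] using (hg.iterate k).2 (g a) (g b)

theorem MH.exists_isEndo_update (hMH : G.MH) {A : Set V} (hA : A.Finite) {a b : V}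
    (haA : a ∉ A) (hbA : b ∉ A) (hv : G.vcol a ≤ G.vcol b)
    (he : ∀ s ∈ A, G.ecol s a ≤ G.ecol s b) :
    ∃ g, G.IsEndo g ∧ (∀ s ∈ A, g s = s) ∧ g a = b := by
  classical
  have hfix : ∀ s ∈ A, update id a b s = s := fun s hs =>
    update_of_ne (ne_of_mem_of_not_mem hs haA) _ _
  have hinj : InjOn (update id a b) (insert a A) := by
    rw [injOn_insert haA, (show EqOn (update id a b) id A from hfix).image_eq, image_id,
      update_self]
    exact ⟨injOn_id A |>.congr fun s hs => (hfix s hs).symm, hbA⟩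
  have hhom : G.IsPartialHom (insert a A) (update id a b) := by
    refine ⟨?_, ?_⟩
    · rintro s (rfl | hs)
      · rwa [update_self]
      · rw [hfix s hs]
    · rintro s (rfl | hs) t (rfl | ht)
      · simp [G.ecol_irrefl]
      · rw [update_self, hfix t ht, G.ecol_symm, G.ecol_symm b]
        exact he t ht
      · rw [update_self, hfix s hs]
        exact he s hs
      · rw [hfix s hs, hfix t ht]
  obtain ⟨g, hg, hgf⟩ := hMH _ (hA.insert a) _ hinj hhom
  exact ⟨g, hg, fun s hs => (hgf s (mem_insert_of_mem a hs)).trans (hfix s hs),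
    (hgf a (mem_insert a A)).trans (update_self ..)⟩

structure IsMinRetract (G : LGraph L V) (F : Set V) (h : V → V) : Prop where
  isEndo : G.IsEndo h
  apply_eq_self : ∀ p ∈ F, h p = p
  idem : ∀ v, h (h v) = h v
  ncard_range_le :
    ∀ q, G.IsEndo q → (∀ p ∈ F, q p = p) → (range h).ncard ≤ (range q).ncard

def SameTypeOver (G : LGraph L V) (F : Set V) (c t : V) : Prop :=
  G.vcol t = G.vcol c ∧ ∀ f ∈ F, G.ecol f t = G.ecol f c

namespace IsMinRetract

theorem apply_eq_self_of_mem_range (hh : G.IsMinRetract F h) {c : V} (hc : c ∈ range h) :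
    h c = c := by
  obtain ⟨v, rfl⟩ := hc
  exact hh.idem v

theorem subset_range (hh : G.IsMinRetract F h) : F ⊆ range h :=
  fun p hp => ⟨p, hh.apply_eq_self p hp⟩

end IsMinRetract

section Finite

variable [Finite V]

variable (G) in
theorem exists_isMinRetract (F : Set V) : ∃ h, G.IsMinRetract F h := by
  obtain ⟨h₀, ⟨hE, hF⟩, hmin⟩ :=
    exists_min_image {q : V → V | G.IsEndo q ∧ ∀ p ∈ F, q p = p} (fun q => (range q).ncard)
      (toFinite _) ⟨id, isEndo_id, fun _ _ => rfl⟩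
  obtain ⟨M, hM, hidem⟩ := exists_iterate_idempotent h₀
  refine ⟨h₀^[M], hE.iterate M, fun p hp => iterate_fixed (hF p hp) M, hidem,
    fun q hq hqF => ?_⟩
  have hsub : range h₀^[M] ⊆ range h₀ := by
    rw [← Nat.sub_add_cancel hM, iterate_succ']
    exact range_comp_subset_range _ _
  exact (ncard_le_ncard hsub).trans (hmin q ⟨hq, hqF⟩)

namespace IsMinRetract

theorem injOn (hh : G.IsMinRetract F h) {q : V → V} (hq : G.IsEndo q)
    (hqF : ∀ p ∈ F, q p = p) : InjOn q (range h) := by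
  refine injOn_of_ncard_image_eq (le_antisymm (ncard_image_le (toFinite _)) ?_)
  rw [← range_comp]
  exact hh.ncard_range_le (q ∘ h) (hh.isEndo.comp hq) fun p hp => by
    simp [hh.apply_eq_self p hp, hqF p hp]

theorem colors_apply_eq (hh : G.IsMinRetract F h) {q : V → V} (hq : G.IsEndo q)
    (hqF : ∀ p ∈ F, q p = p) (hqT : MapsTo q (range h) (range h)) {a b : V}
    (ha : a ∈ range h) (hb : b ∈ range h) :
    G.vcol (q a) = G.vcol a ∧ G.ecol (q a) (q b) = G.ecol a b := by
  obtain ⟨M, hM, hidem⟩ := exists_iterate_idempotent q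
  have hfix : ∀ c ∈ range h, q^[M] c = c := fun c hc =>
    (hh.injOn hq hqF).iterate hqT M (hqT.iterate M hc) hc (hidem c)
  exact ⟨hq.vcol_apply_eq_of_iterate_eq hM (hfix a ha),
    hq.ecol_apply_eq_of_iterate_eq hM (hfix a ha) (hfix b hb)⟩

theorem exists_isEndo_update (hh : G.IsMinRetract F h) (hMH : G.MH) {A : Set V}
    (hAT : A ⊆ range h) {a b : V} (haA : a ∉ A) (hbA : b ∉ A) (hb : b ∈ range h)
    (hv : G.vcol a ≤ G.vcol b) (he : ∀ s ∈ A, G.ecol s a ≤ G.ecol s b) :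
    ∃ q, G.IsEndo q ∧ range q ⊆ range h ∧ (∀ s ∈ A, q s = s) ∧ q a = b := by
  obtain ⟨g, hg, hgA, hga⟩ := hMH.exists_isEndo_update (toFinite A) haA hbA hv he
  refine ⟨h ∘ g, hg.comp hh.isEndo, range_comp_subset_range g h, fun s hs => ?_, ?_⟩
  · simp only [comp_apply, hgA s hs, hh.apply_eq_self_of_mem_range (hAT hs)]
  · simp only [comp_apply, hga, hh.apply_eq_self_of_mem_range hb]

theorem sameTypeOver_of_le (hh : G.IsMinRetract F h) (hMH : G.MH) {A : Set V}
    (hFA : F ⊆ A) (hAT : A ⊆ range h) {a b : V} (ha : a ∈ range h) (hb : b ∈ range h)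
    (haA : a ∉ A) (hbA : b ∉ A) (hv : G.vcol a ≤ G.vcol b)
    (he : ∀ s ∈ A, G.ecol s a ≤ G.ecol s b) : G.SameTypeOver A a b := by
  obtain ⟨q, hq, hqT, hqA, rfl⟩ := hh.exists_isEndo_update hMH hAT haA hbA hb hv he
  have hqF : ∀ p ∈ F, q p = p := fun p hp => hqA p (hFA hp)
  have hmaps : MapsTo q (range h) (range h) := fun c _ => hqT (mem_range_self c)
  refine ⟨(hh.colors_apply_eq hq hqF hmaps ha ha).1, fun s hs => ?_⟩
  simpa only [hqA s hs] using (hh.colors_apply_eq hq hqF hmaps (hAT hs) ha).2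

theorem sameTypeOver_insert (hh : G.IsMinRetract F h) (hMH : G.MH) {s c a b : V}
    (hs : s ∈ range h) (ha : a ∈ range h) (hb : b ∈ range h) (haF : a ∉ insert s F)
    (hbF : b ∉ insert s F) (hca : G.SameTypeOver F c a) (hcb : G.SameTypeOver F c b)
    (hsab : G.ecol s a ≤ G.ecol s b) : G.SameTypeOver (insert s F) a b := by
  refine hh.sameTypeOver_of_le hMH (subset_insert s F) (insert_subset hs hh.subset_range)
    ha hb haF hbF (hca.1.trans hcb.1.symm).le ?_
  rintro r (rfl | hr)
  exacts [hsab, ((hca.2 r hr).trans (hcb.2 r hr).symm).le]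

theorem false_of_orbit (hh : G.IsMinRetract F h) (hMH : G.MH) {g : V → V} (hg : G.IsEndo g)
    (hgT : range g ⊆ range h) {y : V} (hy : y ∈ F) (hgF : ∀ p ∈ F, p ≠ y → g p = p)
    (horbit : ∀ n, g^[n + 1] y ∉ F) (hadj : ⊥ < G.ecol y (g y)) : False := by
  obtain ⟨M, hM, hidem⟩ := exists_iterate_idempotent g
  have horbitT : ∀ n, g^[n + 1] y ∈ range h := fun n =>
    hgT ⟨_, (iterate_succ_apply' g n y).symm⟩
  set c := g^[M] y with hc
  have hcy : G.ecol y c = ⊥ := (hg.iterate M).ecol_apply_eq_bot_of_idempotent hidem y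
  let Z : V → Prop := fun t => t ∈ range h ∧ t ∉ F ∧ G.SameTypeOver F c t
  have hcT : ∀ n, g^[n] c ∈ range h ∧ g^[n] c ∉ F := fun n => by
    rw [hc, ← iterate_add_apply, ← Nat.sub_add_cancel hM, ← Nat.add_assoc]
    exact ⟨horbitT _, horbit _⟩
  have hcycle : ∀ n, Z (g^[n] c) := by
    refine fun n => ⟨(hcT n).1, (hcT n).2, hh.sameTypeOver_of_le hMH subset_rfl hh.subset_range
      (hcT 0).1 (hcT n).1 (hcT 0).2 (hcT n).2 ((hg.iterate n).1 c) fun f hf => ?_⟩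
    by_cases hfy : f = y
    · rw [hfy, hcy]
      exact bot_le
    · simpa only [iterate_fixed (hgF f hf hfy) n] using (hg.iterate n).2 f c
  obtain ⟨n, hs, hgs⟩ := Nat.exists_not_and_succ_of_not_zero_of_exists
    (p := fun n => Z (g^[n + 1] y))
    (fun hZ => hadj.ne (hZ.2.2.2 y hy ▸ hcy).symm) ⟨M - 1, by
      rw [Nat.sub_add_cancel hM]; exact hcycle 0⟩
  set s := g^[n + 1] y with hsdef
  have hgs : Z (g s) := by rwa [hsdef, ← iterate_succ_apply' g]
  have hes : Z (g^[M] s) := by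
    rw [hsdef, ← iterate_add_apply, Nat.add_comm, iterate_add_apply]; exact hcycle _
  have hnot : ∀ t, Z t → t ∉ insert s F := by
    rintro t ht (rfl | htF)
    exacts [hs ht, ht.2.1 htF]
  have hsgs : G.ecol s (g^[M] s) = G.ecol s (g s) := by
    refine ((hh.sameTypeOver_insert hMH (horbitT n) hes.1 hgs.1 (hnot _ hes) (hnot _ hgs)
      hes.2.2 hgs.2.2 ?_).2 s (mem_insert s F)).symm
    rw [(hg.iterate M).ecol_apply_eq_bot_of_idempotent hidem]
    exact bot_le
  have hpath : G.ecol y (g y) ≤ G.ecol s (g s) := by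
    simpa only [hsdef, ← iterate_succ_apply, iterate_succ_apply'] using
      (hg.iterate (n + 1)).2 y (g y)
  rw [← hsgs, (hg.iterate M).ecol_apply_eq_bot_of_idempotent hidem s] at hpath
  exact hadj.not_ge hpath

end IsMinRetract

theorem MH.not_vcol_lt_of_bot_lt_ecol (hMH : G.MH) {u v : V} (huv : ⊥ < G.ecol u v) :
    ¬ G.vcol u < G.vcol v := by
  intro hlt
  obtain ⟨h, hh⟩ := G.exists_isMinRetract {u}
  have hu : h u = u := hh.apply_eq_self u rfl
  have hv : G.vcol u < G.vcol (h v) := hlt.trans_le (hh.isEndo.1 v)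
  obtain ⟨g, hg, hgT, -, hgu⟩ := hh.exists_isEndo_update hMH (empty_subset _)
    (notMem_empty u) (notMem_empty _) (mem_range_self v) hv.le fun _ hs => hs.elim
  refine hh.false_of_orbit hMH hg hgT rfl (fun p hp hpu => absurd hp hpu) (fun n hn => ?_) ?_
  · have hcol := (hg.iterate n).1 (g u)
    rw [← iterate_succ_apply, mem_singleton_iff.1 hn] at hcol
    exact hv.not_ge (hgu ▸ hcol)
  · simpa only [hgu, hu] using huv.trans_le (hh.isEndo.2 u v)

theorem MH.not_ecol_lt_of_bot_lt_ecol (hMH : G.MH) {x y z : V} (hxy : x ≠ y)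
    (hyz : ⊥ < G.ecol y z) (hv : G.vcol y ≤ G.vcol z) : ¬ G.ecol x y < G.ecol x z := by
  intro hlt
  obtain ⟨h, hh⟩ := G.exists_isMinRetract {x, y}
  have hx : h x = x := hh.apply_eq_self x (by simp)
  have hy : h y = y := hh.apply_eq_self y (by simp)
  have hxz : G.ecol x y < G.ecol x (h z) := hlt.trans_le (by simpa only [hx] using hh.isEndo.2 x z)
  have hzx : h z ≠ x := by
    rintro hzx
    rw [hzx, G.ecol_irrefl] at hxz
    exact not_lt_bot hxz
  obtain ⟨g, hg, hgT, hgA, hgy⟩ := hh.exists_isEndo_update hMH (A := {x})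
    (singleton_subset_iff.2 ⟨x, hx⟩) (by simpa using hxy.symm) (by simpa using hzx)
    (mem_range_self z) (hv.trans (hh.isEndo.1 z)) (by simpa using hxz.le)
  have hgx : g x = x := hgA x rfl
  have horbit : ∀ n, G.ecol x y < G.ecol x (g^[n + 1] y) := fun n => by
    have hcol := (hg.iterate n).2 x (g y)
    rw [iterate_fixed hgx, ← iterate_succ_apply] at hcol
    exact hxz.trans_le (hgy ▸ hcol)
  refine hh.false_of_orbit hMH hg hgT (y := y) (by simp) (fun p hp hpy => ?_) (fun n hn => ?_) ?_
  · obtain rfl : p = x := by simpa [hpy] using hp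
    exact hgx
  · have hxn := horbit n
    rcases hn with hn | hn
    · rw [hn, G.ecol_irrefl] at hxn
      exact not_lt_bot hxn
    · rw [mem_singleton_iff.1 hn] at hxn
      exact lt_irrefl _ hxn
  · simpa only [hgy, hy] using hyz.trans_le (hh.isEndo.2 y z)

end Finite

end LGraph

theorem stmt1_general {L V : Type*} [LinearOrder L] [BoundedOrder L] [Finite V]
    (G : LGraph L V) (hMH : G.MH)
    (x y z : V) (hxy : x ≠ y)
    (h2 : ⊥ < G.ecol y z) :
    G.ecol x y < G.ecol x z ↔ G.vcol z < G.vcol y := by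
  have hzy : ¬ G.vcol z < G.vcol y := hMH.not_vcol_lt_of_bot_lt_ecol (G.ecol_symm y z ▸ h2)
  exact iff_of_false (hMH.not_ecol_lt_of_bot_lt_ecol hxy h2 (not_lt.1 hzy)) hzy

/-- Lemma 2(a). -/
theorem stmt1 {L V : Type*} [LinearOrder L] [BoundedOrder L] [Finite V]
    (G : LGraph L V) (hMH : G.MH)
    (x y z : V) (hxy : x ≠ y) (hxz : x ≠ z) (hyz : y ≠ z)
    (h1 : ⊥ < G.ecol x z) (h2 : ⊥ < G.ecol y z) :
    G.ecol x y < G.ecol x z ↔ G.vcol z < G.vcol y :=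
  stmt1_general G hMH x y z hxy h2
end

section
/- Let L be a bounded chain and G a finite MH-homogeneous L-colored graph. If x, y, z are three distinct vertices of G with χ(x,z) ≻ 0 and χ(y,z) ≻ 0, then χ(x,y) = χ(x,z) if and only if χ(y) = χ(z). -/
variable {L V : Type*} [PartialOrder L] [BoundedOrder L]

section StmtTwoProof

variable {L V : Type*} [LinearOrder L] [BoundedOrder L]

private lemma LGraph.endo_comp (G : LGraph L V) {g h : V → V} (hg : G.IsEndo g)
    (hh : G.IsEndo h) : G.IsEndo (g ∘ h) :=
  ⟨fun p => le_trans (hh.1 p) (hg.1 (h p)),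
   fun p q => le_trans (hh.2 p q) (hg.2 (h p) (h q))⟩

private lemma LGraph.endo_iter (G : LGraph L V) {g : V → V} (hg : G.IsEndo g) :
    ∀ n, G.IsEndo (g^[n]) := by
  intro n
  induction n with
  | zero => exact ⟨fun p => le_rfl, fun p q => le_rfl⟩
  | succ n ih =>
      rw [Function.iterate_succ']
      exact G.endo_comp hg ih

private lemma exists_iter_lt {V : Type*} [Finite V] (g : V → V) (a : V) :
    ∃ i j, i < j ∧ g^[i] a = g^[j] a := by
  obtain ⟨i, j, hne, heq⟩ := Finite.exists_ne_map_eq_of_infinite (fun n : ℕ => g^[n] a)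
  rcases hne.lt_or_gt with h | h
  · exact ⟨i, j, h, heq⟩
  · exact ⟨j, i, h, heq.symm⟩

private lemma iter_per {V : Type*} (g : V → V) (a : V) {i j : ℕ} (hij : i < j)
    (heq : g^[i] a = g^[j] a) :
    ∀ m n, i ≤ n → g^[n + m * (j - i)] a = g^[n] a := by
  have one : ∀ n, i ≤ n → g^[n + (j - i)] a = g^[n] a := by
    intro n hn
    obtain ⟨t, rfl⟩ := Nat.exists_eq_add_of_le hn
    have h1 : i + t + (j - i) = t + j := by omega
    rw [h1, Function.iterate_add_apply, ← heq, ← Function.iterate_add_apply,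
      Nat.add_comm t i]
  intro m
  induction m with
  | zero => intro n hn; simp
  | succ m ih =>
      intro n hn
      have h1 : n + (m + 1) * (j - i) = (n + m * (j - i)) + (j - i) := by ring
      rw [h1, one _ (le_trans hn (Nat.le_add_right _ _)), ih n hn]

private lemma lemA [Finite V] (G : LGraph L V) (hMH : G.MH) (u v w : V)
    (huv : u ≠ v) (huw : G.ecol u w ≠ ⊥) (hvw : G.ecol v w ≠ ⊥)
    (hvc : G.vcol v ≤ G.vcol w) (hnull : G.ecol u v = ⊥) : False := by
  classical
  haveI : Fintype V := Fintype.ofFinite V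
  have huwne : u ≠ w := by
    intro h
    apply huw
    rw [← h, G.ecol_irrefl]
  have key : ∀ n : ℕ, ∃ T : Finset V,
      u ∈ T ∧ (∀ s ∈ T, G.ecol v s = ⊥ ∧ s ≠ w ∧ s ≠ v) ∧ n ≤ T.card := by
    intro n
    induction n with
    | zero =>
        refine ⟨{u}, Finset.mem_singleton_self u, ?_, Nat.zero_le _⟩
        intro s hs
        rw [Finset.mem_singleton] at hs
        rw [hs]
        refine ⟨?_, huwne, huv⟩
        rw [G.ecol_symm]
        exact hnull
    | succ n ih =>
        obtain ⟨T, huT, hinv, hcard⟩ := ih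
        set S : Set V := ↑T ∪ {v} with hS
        have hSfin : S.Finite := Set.toFinite S
        set f : V → V := fun s => if s = v then w else s with hf
        have hfv : f v = w := by simp [hf]
        have hfid : ∀ s, s ≠ v → f s = s := by
          intro s hs
          simp [hf, hs]
        have hvS : v ∈ S := Set.mem_union_right _ rfl
        have hmemT : ∀ s ∈ S, s ≠ v → s ∈ T := by
          intro s hs hsv
          rcases hs with h | h
          · exact h
          · exact absurd h hsv
        have hinj : Set.InjOn f S := by
          intro a ha b hb hab
          by_cases hav : a = v <;> by_cases hbv : b = v
          · rw [hav, hbv]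
          · exfalso
            have hbT := hmemT b hb hbv
            rw [hav, hfv, hfid b hbv] at hab
            exact (hinv b hbT).2.1 hab.symm
          · exfalso
            have haT := hmemT a ha hav
            rw [hbv, hfv, hfid a hav] at hab
            exact (hinv a haT).2.1 hab
          · rwa [hfid a hav, hfid b hbv] at hab
        have hhom : G.IsPartialHom S f := by
          constructor
          · intro s hs
            by_cases hsv : s = v
            · rw [hsv, hfv]
              exact hvc
            · rw [hfid s hsv]
          · intro a ha b hb
            by_cases hav : a = v <;> by_cases hbv : b = v
            · rw [hav, hbv, G.ecol_irrefl]
              exact bot_le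
            · rw [hav, (hinv b (hmemT b hb hbv)).1]
              exact bot_le
            · have h1 : G.ecol a v = ⊥ := by
                rw [G.ecol_symm]
                exact (hinv a (hmemT a ha hav)).1
              rw [hbv, h1]
              exact bot_le
            · rw [hfid a hav, hfid b hbv]
        obtain ⟨g, hgE, hgf⟩ := hMH S hSfin f hinj hhom
        have hgv : g v = w := by rw [hgf v hvS, hfv]
        have hfixT : ∀ s ∈ T, g s = s := by
          intro s hs
          rw [hgf s (Set.mem_union_left _ hs), hfid s (hinv s hs).2.2]
        have hfixTn : ∀ s ∈ T, ∀ n, g^[n] s = s := by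
          intro s hs n
          induction n with
          | zero => rfl
          | succ n ihn => rw [Function.iterate_succ_apply', ihn, hfixT s hs]
        obtain ⟨i, j, hij, hper⟩ := exists_iter_lt g w
        set N : ℕ := (i + 1) * (j - i) with hN
        have hk : 1 ≤ j - i := by omega
        have hN1 : 1 ≤ N := Nat.mul_pos (Nat.succ_pos i) (by omega)
        have hNi : i ≤ N - 1 := by
          have h1 : i + 1 ≤ N := by
            calc i + 1 = (i + 1) * 1 := by ring
            _ ≤ (i + 1) * (j - i) := Nat.mul_le_mul_left _ hk
          omega
        set c : V := g^[N - 1] w with hc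
        have hNsplit : N = (N - 1) + 1 := by omega
        have hgNv : g^[N] v = c := by
          rw [hNsplit, Function.iterate_succ_apply, hgv, hc]
        have hgNc : g^[N] c = c := by
          rw [hc, ← Function.iterate_add_apply]
          have h1 : N + (N - 1) = (N - 1) + (i + 1) * (j - i) := by omega
          rw [h1]
          exact iter_per g w hij hper (i + 1) (N - 1) hNi
        have hwu : G.ecol w u ≠ ⊥ := by
          rw [G.ecol_symm]
          exact huw
        have hcu : G.ecol w u ≤ G.ecol c u := by
          have h := (G.endo_iter hgE (N - 1)).2 w u
          rwa [hfixTn u huT (N - 1)] at h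
        have hcv : c ≠ v := by
          intro h
          rw [h] at hcu
          have hvu : G.ecol v u = ⊥ := by
            rw [G.ecol_symm]
            exact hnull
          rw [hvu] at hcu
          exact hwu (le_bot_iff.mp hcu)
        have hvcbot : G.ecol v c = ⊥ := by
          have h := (G.endo_iter hgE N).2 v c
          rw [hgNv, hgNc, G.ecol_irrefl] at h
          exact le_bot_iff.mp h
        have hcw : c ≠ w := by
          intro h
          rw [h] at hvcbot
          exact hvw hvcbot
        have hstep : G.ecol v w ≤ G.ecol c (g c) := by
          have h := (G.endo_iter hgE (N - 1)).2 (g v) (g w)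
          have hh2 : g^[N - 1] (g v) = c := by rw [hgv, hc]
          have hh3 : g^[N - 1] (g w) = g c := by
            rw [hc, ← Function.iterate_succ_apply g (N - 1) w,
              Function.iterate_succ_apply']
          rw [hh2, hh3] at h
          exact le_trans (hgE.2 v w) h
        have hcT : c ∉ T := by
          intro hcTmem
          rw [hfixT c hcTmem, G.ecol_irrefl] at hstep
          exact hvw (le_bot_iff.mp hstep)
        refine ⟨insert c T, Finset.mem_insert_of_mem huT, ?_, ?_⟩
        · intro s hs
          rcases Finset.mem_insert.mp hs with h | h
          · rw [h]
            exact ⟨hvcbot, hcw, hcv⟩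
          · exact hinv s h
        · rw [Finset.card_insert_of_notMem hcT]
          omega
  obtain ⟨T, _, _, hcard⟩ := key (Fintype.card V + 1)
  have hle := Finset.card_le_univ T
  omega

private lemma lemB [Finite V] (G : LGraph L V) (hMH : G.MH) (x y z : V) {g : V → V}
    (hgE : G.IsEndo g) (hgx : g x = x) (hgy : g y = z) (h2 : ⊥ < G.ecol y z) :
    G.ecol x z ≤ G.ecol x y ∧ G.vcol z ≤ G.vcol y := by
  classical
  have astep : ∀ n, G.ecol x (g^[n] y) ≤ G.ecol x (g^[n + 1] y) := by
    intro n
    have h := hgE.2 x (g^[n] y)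
    rwa [hgx, ← Function.iterate_succ_apply' g n y] at h
  have amono : ∀ m n, m ≤ n → G.ecol x (g^[m] y) ≤ G.ecol x (g^[n] y) := by
    intro m n hmn
    induction n, hmn using Nat.le_induction with
    | base => exact le_rfl
    | succ n hmn ih => exact le_trans ih (astep n)
  have bstep : ∀ n, G.vcol (g^[n] y) ≤ G.vcol (g^[n + 1] y) := by
    intro n
    have h := hgE.1 (g^[n] y)
    rwa [← Function.iterate_succ_apply' g n y] at h
  have bmono : ∀ m n, m ≤ n → G.vcol (g^[m] y) ≤ G.vcol (g^[n] y) := by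
    intro m n hmn
    induction n, hmn using Nat.le_induction with
    | base => exact le_rfl
    | succ n hmn ih => exact le_trans ih (bstep n)
  have hQ : ∃ i : ℕ, ∃ j, i < j ∧ g^[i] y = g^[j] y := exists_iter_lt g y
  obtain ⟨i0, ⟨j, hij, heq⟩, hmin⟩ :
      ∃ i0, (∃ j, i0 < j ∧ g^[i0] y = g^[j] y) ∧
        ∀ m < i0, ¬ (∃ j, m < j ∧ g^[m] y = g^[j] y) :=
    ⟨Nat.find hQ, Nat.find_spec hQ, fun m hm => Nat.find_min hQ hm⟩
  rcases Nat.eq_zero_or_pos i0 with h0 | hpos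
  · subst h0
    have hy : y = g^[j] y := by simpa using heq
    constructor
    · have ha : G.ecol x (g^[1] y) ≤ G.ecol x (g^[j] y) := amono 1 j hij
      rw [← hy] at ha
      simpa [hgy] using ha
    · have hb : G.vcol (g^[1] y) ≤ G.vcol (g^[j] y) := bmono 1 j hij
      rw [← hy] at hb
      simpa [hgy] using hb
  · exfalso
    obtain ⟨i', rfl⟩ : ∃ i', i0 = i' + 1 := ⟨i0 - 1, by omega⟩
    obtain ⟨j', rfl⟩ : ∃ j', j = j' + 1 := ⟨j - 1, by omega⟩
    have hpq : g^[i'] y ≠ g^[j'] y := by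
      intro h
      exact hmin i' (by omega) ⟨j', by omega, h⟩
    have hgp : g (g^[i'] y) = g^[i' + 1] y := (Function.iterate_succ_apply' g i' y).symm
    have hgq : g (g^[j'] y) = g^[i' + 1] y :=
      ((Function.iterate_succ_apply' g j' y).symm).trans heq.symm
    have hnull : G.ecol (g^[i'] y) (g^[j'] y) = ⊥ := by
      have h := hgE.2 (g^[i'] y) (g^[j'] y)
      rw [hgp, hgq, G.ecol_irrefl] at h
      exact le_bot_iff.mp h
    have hconsec : ∀ k : ℕ, G.ecol (g^[k] y) (g^[k + 1] y) ≠ ⊥ := by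
      intro k hb
      have h := (G.endo_iter hgE k).2 y (g y)
      rw [← Function.iterate_succ_apply g k y, hgy, hb] at h
      exact absurd (h2.trans_le h) (lt_irrefl ⊥)
    have hqr : G.ecol (g^[j'] y) (g^[i' + 1] y) ≠ ⊥ := by
      intro hb
      apply hconsec j'
      rwa [heq] at hb
    have hpr : G.ecol (g^[i'] y) (g^[i' + 1] y) ≠ ⊥ := hconsec i'
    have hvcp : G.vcol (g^[i'] y) ≤ G.vcol (g^[i' + 1] y) := bstep i'
    refine lemA G hMH (g^[j'] y) (g^[i'] y) (g^[i' + 1] y) hpq.symm hqr hpr hvcp ?_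
    rw [G.ecol_symm]
    exact hnull

private lemma extend_pair [Finite V] (G : LGraph L V) (hMH : G.MH) (x y z : V)
    (hxy : x ≠ y) (hzx : z ≠ x)
    (hv : G.vcol y ≤ G.vcol z) (he : G.ecol x y ≤ G.ecol x z) :
    ∃ g, G.IsEndo g ∧ g x = x ∧ g y = z := by
  classical
  set S : Set V := {x, y} with hS
  set f : V → V := fun s => if s = y then z else s with hf
  have hfy : f y = z := by simp [hf]
  have hfid : ∀ s, s ≠ y → f s = s := by
    intro s hs
    simp [hf, hs]
  have hxS : x ∈ S := Set.mem_insert x _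
  have hyS : y ∈ S := Set.mem_insert_of_mem _ rfl
  have hmem : ∀ s ∈ S, s ≠ y → s = x := by
    intro s hs hsy
    rcases hs with h | h
    · exact h
    · exact absurd h hsy
  have hinj : Set.InjOn f S := by
    intro a ha b hb hab
    by_cases hay : a = y <;> by_cases hby : b = y
    · rw [hay, hby]
    · exfalso
      rw [hay, hfy, hfid b hby] at hab
      exact hzx (hab.trans (hmem b hb hby))
    · exfalso
      rw [hby, hfy, hfid a hay] at hab
      exact hzx (hab.symm.trans (hmem a ha hay))
    · rwa [hfid a hay, hfid b hby] at hab
  have hhom : G.IsPartialHom S f := by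
    constructor
    · intro s hs
      by_cases hsy : s = y
      · rw [hsy, hfy]
        exact hv
      · rw [hfid s hsy]
    · intro a ha b hb
      by_cases hay : a = y <;> by_cases hby : b = y
      · rw [hay, hby, G.ecol_irrefl]
        exact bot_le
      · have hbx : b = x := hmem b hb hby
        rw [hay, hbx, hfy, hfid x hxy, G.ecol_symm y x, G.ecol_symm z x]
        exact he
      · have hax : a = x := hmem a ha hay
        rw [hby, hax, hfy, hfid x hxy]
        exact he
      · rw [hfid a hay, hfid b hby]
  obtain ⟨g, hgE, hgf⟩ := hMH S (Set.toFinite S) f hinj hhom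
  exact ⟨g, hgE, by rw [hgf x hxS, hfid x hxy], by rw [hgf y hyS, hfy]⟩

end StmtTwoProof

/-- Lemma 2(b). -/
theorem stmt2 {L V : Type*} [LinearOrder L] [BoundedOrder L] [Finite V]
    (G : LGraph L V) (hMH : G.MH)
    (x y z : V) (hxy : x ≠ y) (hxz : x ≠ z) (hyz : y ≠ z)
    (h1 : ⊥ < G.ecol x z) (h2 : ⊥ < G.ecol y z) :
    G.ecol x y = G.ecol x z ↔ G.vcol y = G.vcol z := by
  have h2' : ⊥ < G.ecol z y := by
    rw [G.ecol_symm]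
    exact h2
  constructor
  · intro h
    rcases le_total (G.vcol y) (G.vcol z) with hv | hv
    · obtain ⟨g, hgE, hgx, hgy⟩ := extend_pair G hMH x y z hxy hxz.symm hv h.le
      exact le_antisymm hv (lemB G hMH x y z hgE hgx hgy h2).2
    · obtain ⟨g, hgE, hgx, hgz⟩ := extend_pair G hMH x z y hxz hxy.symm hv h.ge
      exact le_antisymm (lemB G hMH x z y hgE hgx hgz h2').2 hv
  · intro h
    rcases le_total (G.ecol x y) (G.ecol x z) with he | he
    · obtain ⟨g, hgE, hgx, hgy⟩ := extend_pair G hMH x y z hxy hxz.symm h.le he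
      exact le_antisymm he (lemB G hMH x y z hgE hgx hgy h2).1
    · obtain ⟨g, hgE, hgx, hgz⟩ := extend_pair G hMH x z y hxz hxy.symm h.ge he
      exact le_antisymm (lemB G hMH x z y hgE hgx hgz h2').1 he
end

section
/- Let L be a bounded chain. A finite L-colored graph G is HH-homogeneous if and only if it is MH-homogeneous. -/
variable {L V : Type*} [PartialOrder L] [BoundedOrder L]

/-!
MH-homogeneity already lets one extend an arbitrary (non-injective) partial homomorphism
`f : S → G` by one point `p`: on each fiber of `f` keep the vertex whose edge to `p` has the
largest color (colors form a chain), so that `f` restricted to these representatives is a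
monomorphism; extend it to an endomorphism `g` and send `p` to `g p`. Each edge from `p`
into a fiber is dominated by the edge to its representative, hence mapped correctly.
On a finite graph, adding the remaining vertices one at a time yields an endomorphism.
-/

namespace LGraph

section PartialOrder

variable {L V : Type*} [PartialOrder L] [BoundedOrder L] {G : LGraph L V}

theorem HH.mh (h : G.HH) : G.MH :=
  fun S hS f _ hf => h S hS f hf

theorem IsPartialHom.mono {S T : Set V} {f : V → V}
    (hf : G.IsPartialHom S f) (hTS : T ⊆ S) : G.IsPartialHom T f :=
  ⟨fun x hx => hf.1 x (hTS hx), fun x hx y hy => hf.2 x (hTS hx) y (hTS hy)⟩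

theorem IsPartialHom.isEndo {f : V → V}
    (hf : G.IsPartialHom Set.univ f) : G.IsEndo f :=
  ⟨fun x => hf.1 x trivial, fun x y => hf.2 x trivial y trivial⟩

theorem IsPartialHom.update_insert [DecidableEq V] {S : Set V} {f : V → V}
    (hf : G.IsPartialHom S f) {p q : V} (hp : p ∉ S) (hvcol : G.vcol p ≤ G.vcol q)
    (hecol : ∀ y ∈ S, G.ecol p y ≤ G.ecol q (f y)) :
    G.IsPartialHom (insert p S) (Function.update f p q) := by
  have hS : ∀ y ∈ S, Function.update f p q y = f y := fun y hy =>
    Function.update_of_ne (ne_of_mem_of_not_mem hy hp) _ _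
  refine ⟨?_, ?_⟩
  · rintro x (rfl | hx)
    · simpa using hvcol
    · simpa [hS x hx] using hf.1 x hx
  · rintro x (rfl | hx) y (rfl | hy)
    · simp [G.ecol_irrefl]
    · simpa [hS y hy] using hecol y hy
    · simpa [hS x hx, G.ecol_symm x, G.ecol_symm (f x)] using hecol x hx
    · simpa [hS x hx, hS y hy] using hf.2 x hx y hy

end PartialOrder

theorem _root_.Set.Finite.exists_fiberwise_argmax {V W L : Type*} [Nonempty V] [LinearOrder L]
    {S : Set V} (hS : S.Finite) (f : V → W) (w : V → L) :
    ∃ s : W → V, ∀ x ∈ S, s (f x) ∈ S ∧ f (s (f x)) = f x ∧ w x ≤ w (s (f x)) := by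
  have hfiber : ∀ z, ∃ y, z ∈ f '' S → y ∈ S ∧ f y = z ∧ ∀ x ∈ S, f x = z → w x ≤ w y := by
    intro z
    by_cases hz : z ∈ f '' S
    · obtain ⟨y, ⟨hyS, hyz⟩, hmax⟩ :=
        Set.exists_max_image (S ∩ f ⁻¹' {z}) w (hS.inter_of_left _)
          (by obtain ⟨x, hx, rfl⟩ := hz; exact ⟨x, hx, rfl⟩)
      exact ⟨y, fun _ => ⟨hyS, hyz, fun x hx hxz => hmax x ⟨hx, hxz⟩⟩⟩
    · exact ⟨Classical.arbitrary V, fun h => absurd h hz⟩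
  choose s hs using hfiber
  refine ⟨s, fun x hx => ?_⟩
  obtain ⟨hsS, hsf, hmax⟩ := hs (f x) ⟨x, hx, rfl⟩
  exact ⟨hsS, hsf, hmax x hx rfl⟩

section LinearOrder

variable {L V : Type*} [LinearOrder L] [BoundedOrder L] {G : LGraph L V}

theorem MH.exists_extend_insert (hMH : G.MH) {S : Set V} (hS : S.Finite) {f : V → V}
    (hf : G.IsPartialHom S f) (p : V) :
    ∃ f' : V → V, G.IsPartialHom (insert p S) f' ∧ Set.EqOn f' f S := by
  classical
  by_cases hp : p ∈ S
  · exact ⟨f, by rwa [Set.insert_eq_self.2 hp], Set.eqOn_refl _ _⟩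
  have : Nonempty V := ⟨p⟩
  obtain ⟨s, hs⟩ := hS.exists_fiberwise_argmax f (G.ecol p)
  set T := (fun x => s (f x)) '' S
  have hTS : T ⊆ S := by
    rintro _ ⟨x, hx, rfl⟩
    exact (hs x hx).1
  have hinj : Set.InjOn f T := by
    rintro _ ⟨x, hx, rfl⟩ _ ⟨y, hy, rfl⟩ hxy
    exact congrArg s ((hs x hx).2.1.symm.trans (hxy.trans (hs y hy).2.1))
  obtain ⟨g, hg, hgT⟩ := hMH T (hS.image _) f hinj (hf.mono hTS)
  refine ⟨Function.update f p (g p), hf.update_insert hp (hg.1 p) fun y hy => ?_,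
    fun x hx => Function.update_of_ne (ne_of_mem_of_not_mem hx hp) _ _⟩
  obtain ⟨-, hsf, hmax⟩ := hs y hy
  calc G.ecol p y ≤ G.ecol p (s (f y)) := hmax
    _ ≤ G.ecol (g p) (g (s (f y))) := hg.2 p _
    _ = G.ecol (g p) (f y) := by rw [hgT _ ⟨y, hy, rfl⟩, hsf]

theorem MH.exists_extend_union (hMH : G.MH) {S D : Set V} (hS : S.Finite) (hD : D.Finite) :
    ∀ {f : V → V}, G.IsPartialHom S f →
      ∃ f' : V → V, G.IsPartialHom (S ∪ D) f' ∧ Set.EqOn f' f S := by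
  induction D, hD using Set.Finite.induction_on with
  | empty => exact fun {f} hf => ⟨f, by rwa [Set.union_empty], Set.eqOn_refl _ _⟩
  | @insert a D _ hD ih =>
    intro f hf
    obtain ⟨f₁, hf₁, hf₁f⟩ := ih hf
    obtain ⟨f₂, hf₂, hf₂f₁⟩ := hMH.exists_extend_insert (hS.union hD) hf₁ a
    refine ⟨f₂, by rwa [Set.union_insert], fun x hx => ?_⟩
    exact (hf₂f₁ (Set.subset_union_left hx)).trans (hf₁f hx)

theorem MH.hh [Finite V] (hMH : G.MH) : G.HH := by
  intro S hS f hf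
  obtain ⟨g, hg, hgf⟩ := hMH.exists_extend_union hS Set.finite_univ hf
  exact ⟨g, (Set.union_univ S ▸ hg).isEndo, hgf⟩

end LinearOrder

end LGraph

/-- Theorem, (1) ↔ (2). -/
theorem stmt7 {L V : Type*} [LinearOrder L] [BoundedOrder L] [Finite V]
    (G : LGraph L V) :
    G.HH ↔ G.MH :=
  ⟨LGraph.HH.mh, LGraph.MH.hh⟩
end

section
/- Let L be a diamond (a poset with least element 0, greatest element 1, and all other elements pairwise incomparable) and let G be a finite MH-homogeneous vertex-uniform L-colored graph containing vertices x0, y0 with χ(x0,y0) = 1. Then for every vertex x of G there is a vertex y with χ(x,y) = 1. -/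
variable {L V : Type*} [PartialOrder L] [BoundedOrder L]

/-- Lemma 4(1). -/
theorem stmt8 {L V : Type*} [PartialOrder L] [BoundedOrder L] [Finite V]
    (hL : IsDiamond L) (G : LGraph L V) (hMH : G.MH) (hVU : G.VertexUniform)
    (x0 y0 : V) (h1 : G.ecol x0 y0 = ⊤) :
    ∀ x : V, ∃ y : V, G.ecol x y = ⊤ := by
  intro x
  obtain ⟨α, hα⟩ := hVU
  obtain ⟨g, ⟨hgv, hge⟩, hgx⟩ := hMH {x0} (Set.finite_singleton x0) (fun _ => x)
    (fun a ha b hb _ => by simp_all)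
    ⟨fun a _ => by simp [hα], fun a ha b hb => by
      rw [Set.mem_singleton_iff] at ha hb
      subst ha; subst hb; simp [G.ecol_irrefl]⟩
  refine ⟨g y0, le_antisymm le_top ?_⟩
  have h := hge x0 y0
  rw [h1, hgx x0 rfl] at h
  exact h
end

section
/- Let L be a diamond and G a finite MH-homogeneous vertex-uniform L-colored graph containing a pair of vertices with edge color 1. Then for any three distinct vertices x, y, z of G, if χ(x,y) = 1 and χ(y,z) = 1 then χ(x,z) = 1 (i.e., the relation 'edge colored 1' is transitive on distinct vertices). -/
variable {L V : Type*} [PartialOrder L] [BoundedOrder L]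

/-- Auxiliary: a top-clique with an outside vertex top-adjacent to one of its
members can be grown by one vertex. -/
lemma grow_clique {L V : Type*} [PartialOrder L] [BoundedOrder L] [Finite V]
    (G : LGraph L V) (hMH : G.MH) (hVU : G.VertexUniform)
    (hbt : (⊥ : L) ≠ ⊤) (K : Set V)
    (hK : ∀ a ∈ K, ∀ b ∈ K, a ≠ b → G.ecol a b = ⊤)
    (y z : V) (hy : y ∈ K) (hz : z ∉ K) (hzy : G.ecol z y = ⊤) :
    ∃ y', y' ∉ K ∧
      ∀ a ∈ insert y' K, ∀ b ∈ insert y' K, a ≠ b → G.ecol a b = ⊤ := by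
  classical
  obtain ⟨α, hα⟩ := hVU
  set S : Set V := insert z (K \ {y}) with hS
  have hzS : z ∈ S := Set.mem_insert _ _
  have hkz : ∀ k ∈ K, k ≠ z := fun k hk h => hz (h ▸ hk)
  set f : V → V := fun w => if w = z then y else w with hf
  have hfz : f z = y := by simp [hf]
  have hfk : ∀ k, k ≠ z → f k = k := fun k hk => by simp [hf, hk]
  have hinj : Set.InjOn f S := by
    intro a ha b hb hab
    by_cases haz : a = z <;> by_cases hbz : b = z
    · rw [haz, hbz]
    · exfalso
      rw [haz, hfz, hfk b hbz] at hab
      rcases hb with hb | hb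
      · exact hbz hb
      · exact hb.2 hab.symm
    · exfalso
      rw [hbz, hfz, hfk a haz] at hab
      rcases ha with ha | ha
      · exact haz ha
      · exact ha.2 hab
    · rwa [hfk a haz, hfk b hbz] at hab
  have hph : G.IsPartialHom S f := by
    constructor
    · intro a _; rw [hα, hα]
    · intro a ha b hb
      by_cases haz : a = z <;> by_cases hbz : b = z
      · rw [haz, hbz, G.ecol_irrefl]; exact bot_le
      · rw [haz, hfz, hfk b hbz]
        have hbK : b ∈ K \ {y} := by
          rcases hb with hb | hb
          · exact absurd hb hbz
          · exact hb
        rw [hK y hy b hbK.1 (fun h => hbK.2 h.symm)]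
        exact le_top
      · rw [hbz, hfz, hfk a haz]
        have haK : a ∈ K \ {y} := by
          rcases ha with ha | ha
          · exact absurd ha haz
          · exact ha
        rw [hK a haK.1 y hy haK.2]
        exact le_top
      · rw [hfk a haz, hfk b hbz]
  obtain ⟨g, ⟨hgv, hge⟩, hgS⟩ := hMH S (Set.toFinite S) f hinj hph
  have hgz : g z = y := by rw [hgS z hzS, hfz]
  have hgy_k : ∀ k ∈ K, G.ecol (g y) k = ⊤ := by
    intro k hk
    by_cases hky : k = y
    · subst hky
      have h := hge z k
      rw [hgz] at h
      rw [hzy] at h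
      rw [G.ecol_symm]
      exact top_le_iff.mp h
    · have hgk : g k = k := by
        rw [hgS k (Set.mem_insert_of_mem _ ⟨hk, hky⟩), hfk k (hkz k hk)]
      have h := hge y k
      rw [hgk, hK y hy k hk (fun h' => hky h'.symm)] at h
      exact top_le_iff.mp h
  have hy'K : g y ∉ K := by
    intro hmem
    have h := hgy_k (g y) hmem
    rw [G.ecol_irrefl] at h
    exact hbt h
  refine ⟨g y, hy'K, ?_⟩
  intro a ha b hb hab
  rcases ha with ha | ha <;> rcases hb with hb | hb
  · exact absurd (ha.trans hb.symm) hab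
  · rw [ha]; exact hgy_k b hb
  · rw [hb, G.ecol_symm]; exact hgy_k a ha
  · exact hK a ha b hb hab

/-- Lemma 4(2). -/
theorem stmt9 {L V : Type*} [PartialOrder L] [BoundedOrder L] [Finite V]
    (hL : IsDiamond L) (G : LGraph L V) (hMH : G.MH) (hVU : G.VertexUniform)
    (x0 y0 : V) (h1 : G.ecol x0 y0 = ⊤) :
    ∀ x y z : V, x ≠ y → y ≠ z → x ≠ z →
      G.ecol x y = ⊤ → G.ecol y z = ⊤ → G.ecol x z = ⊤ := by
  intro x y z hxy hyz hxz hexy heyz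
  by_cases hbt : (⊥ : L) = ⊤
  · exact le_antisymm le_top (hbt ▸ bot_le)
  · by_contra hexz
    have key : ∀ n : ℕ, ∃ K : Set V, x ∈ K ∧ y ∈ K ∧
        (∀ a ∈ K, ∀ b ∈ K, a ≠ b → G.ecol a b = ⊤) ∧ n ≤ K.ncard := by
      intro n
      induction n with
      | zero =>
        refine ⟨{x, y}, by simp, by simp, ?_, Nat.zero_le _⟩
        intro a ha b hb hab
        simp only [Set.mem_insert_iff, Set.mem_singleton_iff] at ha hb
        rcases ha with rfl | rfl <;> rcases hb with rfl | rfl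
        · exact absurd rfl hab
        · exact hexy
        · rw [G.ecol_symm]; exact hexy
        · exact absurd rfl hab
      | succ n ih =>
        obtain ⟨K, hxK, hyK, hK, hn⟩ := ih
        have hzK : z ∉ K := fun h => hexz (hK x hxK z h hxz)
        obtain ⟨y', hy'K, hK'⟩ :=
          grow_clique G hMH hVU hbt K hK y z hyK hzK
            (by rw [G.ecol_symm]; exact heyz)
        refine ⟨insert y' K, Set.mem_insert_of_mem _ hxK,
          Set.mem_insert_of_mem _ hyK, hK', ?_⟩
        rw [Set.ncard_insert_of_notMem hy'K (Set.toFinite K)]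
        omega
    obtain ⟨K, -, -, -, hn⟩ := key (Nat.card V + 1)
    have hle : K.ncard ≤ Nat.card V := by
      have := Set.ncard_le_ncard (Set.subset_univ K) (Set.toFinite _)
      simpa [Set.ncard_univ] using this
    omega
end

section
/- Let L be a diamond and G a finite connected MH-homogeneous vertex-uniform L-colored graph such that no two vertices x, y satisfy χ(x,y) = 1. Then G is complete, i.e., χ(x,y) ≻ 0 for all distinct vertices x, y. -/
variable {L V : Type*} [PartialOrder L] [BoundedOrder L]

/-- Proposition 6. -/
theorem stmt12 {L V : Type*} [PartialOrder L] [BoundedOrder L] [Finite V]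
    (hL : IsDiamond L) (G : LGraph L V) (hMH : G.MH) (hVU : G.VertexUniform)
    (hconn : ∀ x y : V, G.Conn x y)
    (hno1 : ∀ x y : V, G.ecol x y ≠ ⊤) :
    ∀ x y : V, x ≠ y → ⊥ < G.ecol x y := by
  classical
  intro x y hxy
  haveI : Fintype V := Fintype.ofFinite V
  -- cliques
  let Clq : Finset V → Prop := fun C => ∀ a ∈ C, ∀ b ∈ C, a ≠ b → G.ecol a b ≠ ⊥
  have hxclq : Clq {x} := by
    intro a ha b hb hab
    rw [Finset.mem_singleton] at ha hb
    exact absurd (ha.trans hb.symm) hab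
  obtain ⟨C, hCs, hmax⟩ := Finset.exists_max_image (Finset.univ.filter Clq) Finset.card
    ⟨{x}, Finset.mem_filter.mpr ⟨Finset.mem_univ _, hxclq⟩⟩
  have hC : Clq C := (Finset.mem_filter.mp hCs).2
  have hmax' : ∀ D : Finset V, Clq D → D.card ≤ C.card := fun D hD =>
    hmax D (Finset.mem_filter.mpr ⟨Finset.mem_univ _, hD⟩)
  obtain ⟨α, hα⟩ := hVU
  -- every vertex is in C
  have hall : ∀ v : V, v ∈ C := by
    by_contra hv
    push_neg at hv
    obtain ⟨v, hvC⟩ := hv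
    have hCne : C.Nonempty := by
      rw [← Finset.card_pos]
      have := hmax' {x} hxclq
      simp only [Finset.card_singleton] at this
      omega
    obtain ⟨k0, hk0⟩ := hCne
    -- crossing edge
    have key : ∀ {a b : V}, Relation.ReflTransGen G.Adj a b → a ∈ C → b ∉ C →
        ∃ w z, w ∈ C ∧ z ∉ C ∧ G.Adj w z := by
      intro a b hab
      induction hab with
      | refl => intro h1 h2; exact absurd h1 h2
      | @tail p q hap hpq ih =>
        intro ha hq
        by_cases hp : p ∈ C
        · exact ⟨p, q, hp, hq, hpq⟩
        · exact ih ha hp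
    obtain ⟨w, z, hwC, hzC, hwz⟩ := key (hconn k0 v) hk0 hvC
    -- hwz : G.ecol w z ≠ ⊥
    have hzw : G.ecol z w ≠ ⊥ := by rw [G.ecol_symm]; exact hwz
    -- the set S0 of "qualifying" clique vertices
    let S0 : Set V := {u | u ∈ C ∧ u ≠ w ∧ G.ecol u z ≤ G.ecol u w}
    have hzS0 : z ∉ S0 := fun h => hzC h.1
    let f : V → V := fun u => if u = z then w else u
    have hfz : f z = w := by simp [f]
    have hfS0 : ∀ u ∈ S0, f u = u := by
      intro u hu
      have : u ≠ z := by rintro rfl; exact hzS0 hu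
      simp [f, this]
    have hinj : Set.InjOn f (insert z S0) := by
      intro a ha b hb hab
      rcases Set.mem_insert_iff.mp ha with rfl | ha' <;>
        rcases Set.mem_insert_iff.mp hb with rfl | hb'
      · rfl
      · rw [hfz, hfS0 b hb'] at hab; exact absurd hab.symm hb'.2.1
      · rw [hfz, hfS0 a ha'] at hab; exact absurd hab ha'.2.1
      · rw [hfS0 a ha', hfS0 b hb'] at hab; exact hab
    have hhom : G.IsPartialHom (insert z S0) f := by
      constructor
      · intro u _; rw [hα, hα]
      · intro a ha b hb
        rcases Set.mem_insert_iff.mp ha with rfl | ha' <;>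
          rcases Set.mem_insert_iff.mp hb with rfl | hb'
        · rw [G.ecol_irrefl]; exact bot_le
        · rw [hfz, hfS0 b hb', G.ecol_symm a b, G.ecol_symm w b]
          exact hb'.2.2
        · rw [hfz, hfS0 a ha']
          exact ha'.2.2
        · rw [hfS0 a ha', hfS0 b hb']
    obtain ⟨k, hk, hkS⟩ := hMH (insert z S0) (Set.toFinite _) f hinj hhom
    have hkz : k z = w := by
      rw [hkS z (Set.mem_insert _ _), hfz]
    have hku : ∀ u ∈ S0, k u = u := fun u hu => by
      rw [hkS u (Set.mem_insert_of_mem _ hu), hfS0 u hu]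
    -- key fact: w is adjacent to every image k u, u ∈ C
    have key1 : ∀ u ∈ C, G.ecol w (k u) ≠ ⊥ := by
      intro u huC
      by_cases huw : u = w
      · intro h0
        apply hzw
        have h1 := hk.2 z u
        rw [hkz, h0] at h1
        rw [← huw]
        exact le_bot_iff.mp h1
      · by_cases hq : G.ecol u z ≤ G.ecol u w
        · rw [hku u ⟨huC, huw, hq⟩]
          exact hC w hwC u huC (fun h => huw h.symm)
        · have hne : G.ecol u z ≠ ⊥ := fun h => hq (by rw [h]; exact bot_le)
          intro h0
          apply hne
          have h1 := hk.2 u z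
          rw [hkz, G.ecol_symm (k u) w, h0] at h1
          exact le_bot_iff.mp h1
    have key2 : ∀ u ∈ C, k u ≠ w := by
      intro u huC h
      have := key1 u huC
      rw [h, G.ecol_irrefl] at this
      exact this rfl
    have hinjC : Set.InjOn k ↑C := by
      intro a ha b hb hab
      by_contra hne
      have h1 : G.ecol a b ≠ ⊥ := hC a ha b hb hne
      have h2 := hk.2 a b
      rw [hab, G.ecol_irrefl] at h2
      exact h1 (le_bot_iff.mp h2)
    have hwim : w ∉ C.image k := by
      intro h
      obtain ⟨u, huC, hu⟩ := Finset.mem_image.mp h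
      exact key2 u huC hu
    have hC' : Clq (insert w (C.image k)) := by
      intro a ha b hb hab
      rw [Finset.mem_insert] at ha hb
      rcases ha with rfl | ha <;> rcases hb with rfl | hb
      · exact absurd rfl hab
      · obtain ⟨u, huC, rfl⟩ := Finset.mem_image.mp hb
        exact key1 u huC
      · obtain ⟨u, huC, rfl⟩ := Finset.mem_image.mp ha
        rw [G.ecol_symm]
        exact key1 u huC
      · obtain ⟨u, huC, rfl⟩ := Finset.mem_image.mp ha
        obtain ⟨u', hu'C, rfl⟩ := Finset.mem_image.mp hb
        have huv : u ≠ u' := fun h => hab (by rw [h])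
        intro h0
        apply hC u huC u' hu'C huv
        have h2 := hk.2 u u'
        rw [h0] at h2
        exact le_bot_iff.mp h2
    have hcard : (insert w (C.image k)).card = C.card + 1 := by
      rw [Finset.card_insert_of_notMem hwim, Finset.card_image_of_injOn hinjC]
    have := hmax' _ hC'
    rw [hcard] at this
    omega
  exact bot_lt_iff_ne_bot.mpr (hC x (hall x) y (hall y) hxy)
end

section
/- Let L be a bounded chain and let G be a finite L-colored graph in which every connected component is uniform, and whenever components U(n1, α1, β1) and U(n2, α2, β2) satisfy α1 ⪯ α2 we have n1 ≤ n2 and β1 ⪯ β2. Then G is HH-homogeneous. -/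
variable {L V : Type*} [PartialOrder L] [BoundedOrder L]

namespace LGraph

variable {G : LGraph L V}

theorem isEndo_iff_isPartialHom_univ {f : V → V} : G.IsEndo f ↔ G.IsPartialHom Set.univ f := by
  simp [IsEndo, IsPartialHom]

theorem IsPartialHom.insert_update [DecidableEq V] {T : Set V} {f : V → V} {a v : V}
    (hf : G.IsPartialHom T f) (ha : a ∉ T) (hv : G.vcol a ≤ G.vcol v)
    (he : ∀ y ∈ T, G.ecol a y ≤ G.ecol v (f y)) :
    G.IsPartialHom (insert a T) (Function.update f a v) := by
  have hupd : ∀ y ∈ T, Function.update f a v y = f y :=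
    fun y hy => Function.update_of_ne (ne_of_mem_of_not_mem hy ha) v f
  refine ⟨?_, ?_⟩
  · rintro z (rfl | hz)
    · simpa using hv
    · simpa [hupd z hz] using hf.1 z hz
  · rintro z (rfl | hz) w (rfl | hw)
    · simp [G.ecol_irrefl]
    · simpa [hupd w hw] using he w hw
    · simpa [hupd z hz, G.ecol_symm z, G.ecol_symm (f z)] using he z hz
    · simpa [hupd z hz, hupd w hw] using hf.2 z hz w hw

/-- The conditions on `v` say that `Function.update f a v` is a homomorphism on `insert a T`
(`IsPartialHom.insert_update`). -/
def OnePointExtension (G : LGraph L V) : Prop :=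
  ∀ (T : Set V) (f : V → V), G.IsPartialHom T f → ∀ a ∉ T,
    ∃ v, G.vcol a ≤ G.vcol v ∧ ∀ y ∈ T, G.ecol a y ≤ G.ecol v (f y)

theorem OnePointExtension.exists_extend (hG : G.OnePointExtension) {R : Set V} (hR : R.Finite)
    {T : Set V} {f : V → V} (hf : G.IsPartialHom T f) :
    ∃ g, G.IsPartialHom (T ∪ R) g ∧ Set.EqOn g f T := by
  classical
  induction R, hR using Set.Finite.induction_on with
  | empty => exact ⟨f, by simpa using hf, Set.eqOn_refl f T⟩
  | @insert a R _ _ ih =>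
    obtain ⟨g, hg, hgf⟩ := ih
    rw [Set.union_insert]
    by_cases ha : a ∈ T ∪ R
    · exact ⟨g, by rwa [Set.insert_eq_of_mem ha], hgf⟩
    obtain ⟨v, hv, he⟩ := hG _ g hg a ha
    refine ⟨Function.update g a v, hg.insert_update ha hv he, fun y hy => ?_⟩
    rw [Function.update_of_ne (ne_of_mem_of_not_mem (Or.inl hy) ha), hgf hy]

theorem OnePointExtension.hh [Finite V] (hG : G.OnePointExtension) : G.HH := by
  intro S _ f hf
  obtain ⟨g, hg, hgf⟩ := hG.exists_extend Set.finite_univ hf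
  exact ⟨g, isEndo_iff_isPartialHom_univ.mpr (by simpa using hg), hgf⟩

theorem ecol_eq_bot_of_not_conn {a y : V} (h : ¬ G.Conn a y) : G.ecol a y = ⊥ :=
  not_not.mp fun hadj => h (Relation.ReflTransGen.single hadj)

theorem IsPartialHom.adj {T : Set V} {f : V → V} (hf : G.IsPartialHom T f) {x y : V}
    (hx : x ∈ T) (hy : y ∈ T) (hxy : G.Adj x y) : G.Adj (f x) (f y) :=
  fun h => hxy (le_bot_iff.mp (h ▸ hf.2 x hx y hy))

theorem IsPartialHom.injOn_inter_of_clique {T C : Set V} {f : V → V} (hf : G.IsPartialHom T f)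
    (hC : ∀ x ∈ C, ∀ y ∈ C, x ≠ y → G.Adj x y) : Set.InjOn f (C ∩ T) := by
  intro x hx y hy hfxy
  by_contra hxy
  exact hf.adj hx.2 hy.2 (hC x hx.1 y hy.1 hxy) (hfxy ▸ G.ecol_irrefl (f x))

theorem IsPartialHom.mapsTo_inter_of_clique {T C : Set V} {f : V → V} (hf : G.IsPartialHom T f)
    (hC : ∀ x ∈ C, ∀ y ∈ C, x ≠ y → G.Adj x y) {x : V} (hx : x ∈ C ∩ T) :
    Set.MapsTo f (C ∩ T) {y | G.Conn (f x) y} := by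
  intro y hy
  rcases eq_or_ne x y with rfl | hxy
  · exact Relation.ReflTransGen.refl
  · exact Relation.ReflTransGen.single (hf.adj hx.2 hy.2 (hC x hx.1 y hy.1 hxy))

def ComponentsMonotone (G : LGraph L V) : Prop :=
  ∀ (S1 S2 : Set V) (n1 n2 : ℕ) (α1 α2 β1 β2 : L),
    G.IsComponent S1 → G.IsComponent S2 → G.IsU S1 n1 α1 β1 → G.IsU S2 n2 α2 β2 →
    α1 ≤ α2 → n1 ≤ n2 ∧ β1 ≤ β2

theorem onePointExtension_of_componentsMonotone [Finite V]
    (huniform : ∀ S : Set V, G.IsComponent S → G.UniformOn S) (hmono : G.ComponentsMonotone) :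
    G.OnePointExtension := by
  intro T f hf a ha
  set C : Set V := {y | G.Conn a y}
  have hout : ∀ y ∉ C, G.ecol a y = ⊥ := fun y => ecol_eq_bot_of_not_conn
  by_cases hCT : (C ∩ T).Nonempty
  swap
  · exact ⟨a, le_rfl, fun y hy => by simp [hout y fun hyC => hCT ⟨y, hyC, hy⟩]⟩
  obtain ⟨x, hxC, hxT⟩ := hCT
  set D : Set V := {y | G.Conn (f x) y}
  obtain ⟨⟨α, hα⟩, β, hβ, hCβ⟩ := huniform C ⟨a, rfl⟩
  obtain ⟨⟨α', hα'⟩, β', hβ', hDβ'⟩ := huniform D ⟨f x, rfl⟩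
  have hclique : ∀ y ∈ C, ∀ z ∈ C, y ≠ z → G.Adj y z := fun y hy z hz hyz => by
    rw [Adj, hCβ y hy z hz hyz]; exact hβ.ne'
  have haC : a ∈ C := Relation.ReflTransGen.refl
  have hfxD : f x ∈ D := Relation.ReflTransGen.refl
  have hαα' : α ≤ α' := hα x hxC ▸ hα' (f x) hfxD ▸ hf.1 x hxT
  obtain ⟨hCD, hββ'⟩ := hmono C D _ _ α α' β β' ⟨a, rfl⟩ ⟨f x, rfl⟩
    ⟨rfl, hα, hβ, hCβ⟩ ⟨rfl, hα', hβ', hDβ'⟩ hαα'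
  have hmaps := hf.mapsTo_inter_of_clique hclique ⟨hxC, hxT⟩
  have himage : (f '' (C ∩ T)).ncard < D.ncard := calc
    (f '' (C ∩ T)).ncard = (C ∩ T).ncard := (hf.injOn_inter_of_clique hclique).ncard_image
    _ < C.ncard := Set.ncard_lt_ncard
      (Set.ssubset_iff_subset_ne.mpr ⟨Set.inter_subset_left, fun h => ha (h ▸ haC).2⟩)
    _ ≤ D.ncard := hCD
  obtain ⟨v, hvD, hvf⟩ := Set.exists_mem_notMem_of_ncard_lt_ncard himage
  refine ⟨v, hα a haC ▸ hα' v hvD ▸ hαα', fun y hyT => ?_⟩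
  by_cases hyC : y ∈ C
  · have hvy : v ≠ f y := fun h => hvf ⟨y, ⟨hyC, hyT⟩, h.symm⟩
    rw [hCβ a haC y hyC (ne_of_mem_of_not_mem hyT ha).symm,
      hDβ' v hvD (f y) (hmaps ⟨hyC, hyT⟩) hvy]
    exact hββ'
  · simp [hout y hyC]

end LGraph

/-- (3) ⇒ (1) of the Theorem. -/
theorem stmt19 {L V : Type*} [LinearOrder L] [BoundedOrder L] [Finite V]
    (G : LGraph L V)
    (huniform : ∀ S : Set V, G.IsComponent S → G.UniformOn S)
    (hmono : ∀ (S1 S2 : Set V) (n1 n2 : ℕ) (α1 α2 β1 β2 : L),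
        G.IsComponent S1 → G.IsComponent S2 →
        G.IsU S1 n1 α1 β1 → G.IsU S2 n2 α2 β2 →
        α1 ≤ α2 → n1 ≤ n2 ∧ β1 ≤ β2) :
    G.HH :=
  (LGraph.onePointExtension_of_componentsMonotone huniform hmono).hh
end
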